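/- Let 𝓐 ⊆ [0, 2π) be a finite set of A distinct phase values, let m ≥ 1, K ≥ 1, B ≥ 1 be integers, and let β > 0. For every finite constellation 𝓑 ⊆ ℂ with |𝓑| = B, the set 𝓒(𝓑) satisfies |𝓒(𝓑)| ≤ B^m · A^K = |𝓒(𝓑_ASK)|; that is, among all B-point constellations, the ASK constellation 𝓑_ASK = {β, 3β, …, (2B−1)β} maximizes the cardinality of 𝓒. -/

import Mathlib

open Complex Real

/-- The set `𝓒(𝓑)` of all distinct `K × m` complex matrices of the form
`C = (e^{iθ_1}, …, e^{iθ_K})ᵀ x` with `x ∈ 𝓑^m` and `θ ∈ 𝓐^K`. -/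
def matConfigSet (m K : ℕ) (A : Finset ℝ) (B : Finset ℂ) :
    Set (Matrix (Fin K) (Fin m) ℂ) :=
  {C | ∃ x : Fin m → ℂ, ∃ θ : Fin K → ℝ, (∀ i, x i ∈ B) ∧ (∀ k, θ k ∈ A) ∧
    C = fun k i => Complex.exp (Complex.I * (θ k : ℂ)) * x i}

/-
A matrix of `𝓒(𝓑)` is the rank-one product of the unimodular column `(e^{iθ_k})` and the row `x`,
so `|𝓒(𝓑)| ≤ B^m A^K`. When all points of `𝓑` are positive reals, the entry moduli of any row
recover `x`, and then any column recovers the phases, which `𝓐 ⊆ [0, 2π)` makes unique; hence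
the bound is attained by the ASK constellation.
-/

open Matrix Finset ComplexOrder

noncomputable def phaseMatrix {m K : ℕ} (x : Fin m → ℂ) (θ : Fin K → ℝ) :
    Matrix (Fin K) (Fin m) ℂ :=
  vecMulVec (fun k => cexp (I * θ k)) x

noncomputable def askConstellation (B : ℕ) (β : ℝ) : Finset ℂ :=
  (Icc 1 B).image fun b : ℕ => ((2 * (b : ℝ) - 1) * β : ℂ)

lemma matConfigSet_eq_image₂ (m K : ℕ) (A : Finset ℝ) (B : Finset ℂ) :
    matConfigSet m K A B =
      ↑(image₂ phaseMatrix (Fintype.piFinset fun _ : Fin m => B)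
        (Fintype.piFinset fun _ : Fin K => A)) := by
  ext C
  simp only [matConfigSet, coe_image₂, Set.mem_image2, mem_coe, Fintype.mem_piFinset,
    Set.mem_ofPred_eq]
  constructor
  · rintro ⟨x, θ, hx, hθ, rfl⟩
    exact ⟨x, hx, θ, hθ, rfl⟩
  · rintro ⟨x, hx, θ, hθ, rfl⟩
    exact ⟨x, θ, hx, hθ, rfl⟩

lemma ncard_matConfigSet_le (m K : ℕ) (A : Finset ℝ) (B : Finset ℂ) :
    (matConfigSet m K A B).ncard ≤ #B ^ m * #A ^ K := by
  rw [matConfigSet_eq_image₂, Set.ncard_coe_finset, ← Fintype.card_piFinset_const B m,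
    ← Fintype.card_piFinset_const A K]
  exact card_image₂_le _ _ _

lemma Complex.exp_I_mul_injOn_Ico {a b : ℝ} (h : b - a ≤ 2 * π) :
    Set.InjOn (fun θ : ℝ => cexp (I * θ)) (Set.Ico a b) := by
  intro s hs t ht hst
  refine Circle.exp_injOn_Ico h hs ht (Circle.ext ?_)
  simpa only [Circle.coe_exp, mul_comm _ I] using hst

lemma Complex.eq_and_eq_of_mul_eq_mul_of_norm_eq_one {u v r s : ℂ} (hu : ‖u‖ = 1)
    (hv : ‖v‖ = 1) (hr : 0 < r) (hs : 0 < s) (h : u * r = v * s) : u = v ∧ r = s := by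
  have hrs : r = s := by
    have := congrArg norm h
    rw [norm_mul, norm_mul, hu, hv, one_mul, one_mul] at this
    rw [eq_coe_norm_of_nonneg hr.le, eq_coe_norm_of_nonneg hs.le, this]
  subst hrs
  exact ⟨mul_right_cancel₀ hr.ne' h, rfl⟩

lemma eq_and_eq_of_vecMulVec_eq {ι κ : Type*} [Nonempty ι] [Nonempty κ] {u v : ι → ℂ} {x y : κ → ℂ}
    (hu : ∀ i, ‖u i‖ = 1) (hv : ∀ i, ‖v i‖ = 1) (hx : ∀ j, 0 < x j) (hy : ∀ j, 0 < y j)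
    (h : vecMulVec u x = vecMulVec v y) : u = v ∧ x = y := by
  have hentry i j := eq_and_eq_of_mul_eq_mul_of_norm_eq_one (hu i) (hv i) (hx j) (hy j)
    (congrFun (congrFun h i) j)
  obtain ⟨i₀⟩ := ‹Nonempty ι›
  obtain ⟨j₀⟩ := ‹Nonempty κ›
  exact ⟨funext fun i => (hentry i j₀).1, funext fun j => (hentry i₀ j).2⟩

lemma ncard_matConfigSet_of_pos {m K : ℕ} (hm : 1 ≤ m) (hK : 1 ≤ K) {A : Finset ℝ}
    (hA : ∀ a ∈ A, a ∈ Set.Ico 0 (2 * π)) {B : Finset ℂ} (hB : ∀ b ∈ B, 0 < b) :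
    (matConfigSet m K A B).ncard = #B ^ m * #A ^ K := by
  have : Nonempty (Fin m) := ⟨⟨0, hm⟩⟩
  have : Nonempty (Fin K) := ⟨⟨0, hK⟩⟩
  rw [matConfigSet_eq_image₂, Set.ncard_coe_finset, ← Fintype.card_piFinset_const B m,
    ← Fintype.card_piFinset_const A K, card_image₂_iff]
  rintro ⟨x, θ⟩ hxθ ⟨y, φ⟩ hyφ h
  simp only [Set.mem_prod, mem_coe, Fintype.mem_piFinset] at hxθ hyφ
  have hunit (ψ : Fin K → ℝ) k : ‖cexp (I * ψ k)‖ = 1 := by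
    rw [mul_comm, norm_exp_ofReal_mul_I]
  obtain ⟨hphase, rfl⟩ := eq_and_eq_of_vecMulVec_eq (hunit θ) (hunit φ)
    (fun i => hB _ (hxθ.1 i)) (fun i => hB _ (hyφ.1 i)) h
  have hθφ : θ = φ := funext fun k => exp_I_mul_injOn_Ico (by simp)
    (hA _ (hxθ.2 k)) (hA _ (hyφ.2 k)) (congrFun hphase k)
  rw [hθφ]

lemma pos_of_mem_askConstellation {B : ℕ} {β : ℝ} (hβ : 0 < β) {c : ℂ}
    (hc : c ∈ askConstellation B β) : 0 < c := by
  obtain ⟨b, hb, rfl⟩ := mem_image.mp hc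
  have hb1 : (1 : ℝ) ≤ b := by exact_mod_cast (mem_Icc.mp hb).1
  have : 0 < (2 * (b : ℝ) - 1) * β := mul_pos (by linarith) hβ
  exact_mod_cast this

lemma card_askConstellation (B : ℕ) {β : ℝ} (hβ : β ≠ 0) : #(askConstellation B β) = B := by
  rw [askConstellation, card_image_of_injective, Nat.card_Icc, Nat.add_sub_cancel]
  intro a b hab
  dsimp only at hab
  have hab' : (2 * (a : ℝ) - 1) * β = (2 * (b : ℝ) - 1) * β := by exact_mod_cast hab
  exact_mod_cast (by linarith [mul_right_cancel₀ hβ hab'] : (a : ℝ) = b)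

theorem stmt_2_general (A : Finset ℝ) (hA : ∀ a ∈ A, 0 ≤ a ∧ a < 2 * Real.pi)
    (m K B : ℕ) (hm : 1 ≤ m) (hK : 1 ≤ K) (β : ℝ) (hβ : 0 < β)
    (Bc : Finset ℂ) (hBc : Bc.card = B) :
    (matConfigSet m K A Bc).ncard ≤ B ^ m * A.card ^ K ∧
    B ^ m * A.card ^ K
      = (matConfigSet m K A
          ((Finset.Icc 1 B).image (fun b : ℕ => ((2 * (b : ℝ) - 1) * β : ℂ)))).ncard := by
  refine ⟨hBc ▸ ncard_matConfigSet_le m K A Bc, ?_⟩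
  have hASK := ncard_matConfigSet_of_pos hm hK hA fun _ => pos_of_mem_askConstellation (B := B) hβ
  rw [card_askConstellation B hβ.ne'] at hASK
  exact hASK.symm

/-- For any `B`-point constellation `𝓑 ⊆ ℂ` and finite phase set
`𝓐 ⊆ [0, 2π)`, `|𝓒(𝓑)| ≤ B^m · A^K = |𝓒(𝓑_ASK)|`: the ASK constellation
`𝓑_ASK = {β, 3β, …, (2B−1)β}` maximizes the cardinality of `𝓒`. -/
theorem stmt_2 (A : Finset ℝ) (hA : ∀ a ∈ A, 0 ≤ a ∧ a < 2 * Real.pi)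
    (m K B : ℕ) (hm : 1 ≤ m) (hK : 1 ≤ K) (hB : 1 ≤ B) (β : ℝ) (hβ : 0 < β)
    (Bc : Finset ℂ) (hBc : Bc.card = B) :
    (matConfigSet m K A Bc).ncard ≤ B ^ m * A.card ^ K ∧
    B ^ m * A.card ^ K
      = (matConfigSet m K A
          ((Finset.Icc 1 B).image (fun b : ℕ => ((2 * (b : ℝ) - 1) * β : ℂ)))).ncard :=
  stmt_2_general A hA m K B hm hK β hβ Bc hBc
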